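/- arXiv:2602.21495 — 8 statements merged into one kernel-verified Lean document; each statement's English description precedes it below -/
import Mathlib

section
/- Let Λ, λ, μ, e, L, z_T, z_C be positive reals with μ < λ and z_T ≥ z_C, and define R(τ) = μ·τ·[Λ/λ + ((z_T − z_C − τ)(e+L)/(eL))·(1 − μ/λ)]. If z_T − z_C ≥ Λ·e·L/((λ−μ)(e+L)), then the maximum of R over [max{0, z_T − z_C − Λ·e·L/(μ(e+L))}, z_T − z_C] is attained at τ* = max{ (z_T − z_C)/2 + Λ·e·L/(2(λ−μ)(e+L)), z_T − z_C − Λ·e·L/(μ(e+L)) }. -/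
/-- Static revenue optimization in Vickrey's bottleneck model with an outside
option: in the high transit-cost regime, the revenue-optimal static toll is
`max ((zT-zC)/2 + ΛeL/(2(λ-μ)(e+L))) (zT-zC - ΛeL/(μ(e+L)))`. -/
theorem static_revenue_opt_high_regime
    (Lam lam mu e L zT zC : ℝ)
    (hLam : 0 < Lam) (hlam : 0 < lam) (hmu : 0 < mu) (he : 0 < e) (hL : 0 < L)
    (hzT : 0 < zT) (hzC : 0 < zC)
    (hmulam : mu < lam) (hz : zC ≤ zT)
    (R : ℝ → ℝ)
    (hR : ∀ τ : ℝ, R τ = mu * τ * (Lam / lam +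
      ((zT - zC - τ) * (e + L) / (e * L)) * (1 - mu / lam)))
    (hhigh : zT - zC ≥ Lam * e * L / ((lam - mu) * (e + L))) :
    (max ((zT - zC) / 2 + Lam * e * L / (2 * (lam - mu) * (e + L)))
        (zT - zC - Lam * e * L / (mu * (e + L)))) ∈
      Set.Icc (max 0 (zT - zC - Lam * e * L / (mu * (e + L)))) (zT - zC) ∧
    ∀ τ ∈ Set.Icc (max 0 (zT - zC - Lam * e * L / (mu * (e + L)))) (zT - zC),
      R τ ≤ R (max ((zT - zC) / 2 + Lam * e * L / (2 * (lam - mu) * (e + L)))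
        (zT - zC - Lam * e * L / (mu * (e + L)))) := by
  set a := zT - zC with ha
  set A := Lam * e * L / ((lam - mu) * (e + L)) with hA
  set B := Lam * e * L / (mu * (e + L)) with hB
  set K := mu * (e + L) / (e * L) * (1 - mu / lam) with hK
  have hlm : 0 < lam - mu := by linarith
  have heL : 0 < e + L := by linarith
  have hApos : 0 < A := by positivity
  have hBpos : 0 < B := by positivity
  have hKpos : 0 < K := by
    have : 0 < 1 - mu / lam := by
      rw [sub_pos, div_lt_one hlam]; exact hmulam
    positivity
  have hRx : ∀ x : ℝ, R x = K * (x * (a + A - x)) := by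
    intro x
    rw [hR x, hK, hA, ha]
    field_simp
    ring
  have hAhalf : Lam * e * L / (2 * (lam - mu) * (e + L)) = A / 2 := by
    rw [hA]; field_simp
  rw [hAhalf]
  have ha2 : a / 2 + A / 2 = (a + A) / 2 := by ring
  have hvpos : 0 < (a + A) / 2 := by linarith
  have hvle : (a + A) / 2 ≤ a := by linarith
  rcases le_total (a - B) (a / 2 + A / 2) with hc | hc
  · rw [max_eq_left hc]
    constructor
    · exact ⟨max_le (by linarith) hc, by linarith⟩
    · intro τ hτ
      rw [hRx, hRx]
      have := sq_nonneg (τ - (a + A) / 2)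
      nlinarith [hKpos, sq_nonneg (τ - (a + A) / 2)]
  · rw [max_eq_right hc]
    have ht : 0 ≤ a - B := by linarith
    constructor
    · exact ⟨max_le ht le_rfl, by linarith⟩
    · intro τ hτ
      obtain ⟨h1, h2⟩ := hτ
      have h1' : a - B ≤ τ := le_trans (le_max_right _ _) h1
      rw [hRx, hRx]
      have key : 0 ≤ (τ - (a - B)) * (τ + (a - B) - (a + A)) := by
        apply mul_nonneg <;> linarith
      nlinarith [hKpos, key]
end

section
/- Let Λ, λ, μ, e, L, z_T, z_C be positive reals with μ < λ and z_T ≥ z_C, and define R(f) = (z_T − z_C)·(f·Λ·μ/λ + (1−f)·Λ) − (Λ²/(2μ))·(eL/(e+L))·(1−f)². Then the maximum of R over f ∈ [max{1 − (z_T − z_C)·μ(e+L)/(Λ·e·L), 0}, 1] is attained at f* = max{1 − ((z_T − z_C)·μ(e+L)/(Λ·e·L))·(1 − μ/λ), 0}. -/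
/-- Reduced one-dimensional dynamic revenue optimization in Vickrey's
bottleneck model with an outside option: the maximum over the feasible set of
flat-toll fractions is attained at `f*`. -/
theorem dynamic_revenue_opt_fraction
    (Lam lam mu e L zT zC : ℝ)
    (hLam : 0 < Lam) (hlam : 0 < lam) (hmu : 0 < mu) (he : 0 < e) (hL : 0 < L)
    (hzT : 0 < zT) (hzC : 0 < zC)
    (hmulam : mu < lam) (hz : zC ≤ zT)
    (R : ℝ → ℝ)
    (hR : ∀ f : ℝ, R f = (zT - zC) * (f * Lam * mu / lam + (1 - f) * Lam) -
      (Lam ^ 2 / (2 * mu)) * (e * L / (e + L)) * (1 - f) ^ 2) :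
    (max (1 - (zT - zC) * mu * (e + L) / (Lam * e * L) * (1 - mu / lam)) 0) ∈
      Set.Icc (max (1 - (zT - zC) * mu * (e + L) / (Lam * e * L)) 0) 1 ∧
    ∀ f ∈ Set.Icc (max (1 - (zT - zC) * mu * (e + L) / (Lam * e * L)) 0) 1,
      R f ≤ R (max (1 - (zT - zC) * mu * (e + L) / (Lam * e * L) * (1 - mu / lam)) 0) := by
  have heL : 0 < e + L := by linarith
  have hA0 : 0 ≤ (zT - zC) * mu * (e + L) / (Lam * e * L) := by
    apply div_nonneg
    · apply mul_nonneg (mul_nonneg (by linarith) hmu.le) heL.le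
    · positivity
  obtain ⟨A, hAdef⟩ : ∃ x : ℝ, x = (zT - zC) * mu * (e + L) / (Lam * e * L) := ⟨_, rfl⟩
  rw [← hAdef] at hA0 ⊢
  have hfrac : 0 < 1 - mu / lam := by
    have : mu / lam < 1 := (div_lt_one hlam).2 hmulam
    linarith
  have hfrac1 : 1 - mu / lam ≤ 1 := by
    have : 0 ≤ mu / lam := by positivity
    linarith
  obtain ⟨f0, hf0def⟩ : ∃ x : ℝ, x = 1 - A * (1 - mu / lam) := ⟨_, rfl⟩
  rw [← hf0def]
  have hK : 0 < Lam ^ 2 / (2 * mu) * (e * L / (e + L)) := by positivity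
  obtain ⟨K, hKdef⟩ : ∃ x : ℝ, x = Lam ^ 2 / (2 * mu) * (e * L / (e + L)) := ⟨_, rfl⟩
  rw [← hKdef] at hK
  have hdiff : ∀ f : ℝ, R f - R f0 = -K * (f - f0) ^ 2 := by
    intro f
    rw [hR, hR, hf0def, hKdef, hAdef]
    field_simp
    ring
  have hmem : (max f0 0) ∈ Set.Icc (max (1 - A) 0) 1 := by
    constructor
    · apply max_le_max _ le_rfl
      have h1 : A * (1 - mu / lam) ≤ A := by nlinarith
      rw [hf0def]; linarith
    · have h1 : f0 ≤ 1 := by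
        have : 0 ≤ A * (1 - mu / lam) := mul_nonneg hA0 hfrac.le
        rw [hf0def]; linarith
      exact max_le h1 (by norm_num)
  refine ⟨hmem, ?_⟩
  intro f hf
  rcases le_or_gt 0 f0 with h0 | h0
  · rw [max_eq_left h0]
    have := hdiff f
    nlinarith [sq_nonneg (f - f0)]
  · rw [max_eq_right h0.le]
    have hfge : 0 ≤ f := le_trans (le_max_right _ _) hf.1
    have h1 := hdiff f
    have h2 := hdiff 0
    nlinarith [mul_nonneg (mul_nonneg hK.le hfge) (show (0:ℝ) ≤ f - 2 * f0 by linarith)]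
end

section
/- Let Λ, λ, μ, e, L be positive reals with μ < λ, and let z_T ≥ z_C with 0 ≤ z_T − z_C < Λ·e·L/((λ−μ)(e+L)). Set R_s = (z_T − z_C)·Λ·μ/λ and R_d = (z_T − z_C)·Λ·μ/λ + ((z_T − z_C)²·μ(e+L)/(2eL))·(1 − μ/λ)². Then R_s ≥ (2/(3 − μ/λ))·R_d. -/
/-!
With `t := (z_T − z_C)(λ − μ)(e + L)/(Λ e L)`, i.e. `t = 1/s` in the paper's notation, the
quadratic part of `R_d` equals `R_s · t (1 − μ/λ)/2` because `(μ/λ)(λ − μ) = μ (1 − μ/λ)`.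
Hence `R_d = R_s (1 + t a/2)` with `a = 1 − μ/λ ≥ 0`, and the low regime gives `t < 1`,
so `R_d ≤ R_s (1 + a/2) = R_s (3 − μ/λ)/2`.
-/

theorem two_div_two_add_mul_mul_one_add_le {R a t : ℝ} (hR : 0 ≤ R) (ha : 0 ≤ a) (ht : t ≤ 1) :
    2 / (2 + a) * (R * (1 + t * a / 2)) ≤ R := by
  have hta : t * a ≤ a := mul_le_of_le_one_left ha ht
  rw [div_mul_eq_mul_div, div_le_iff₀ (by positivity)]
  nlinarith

theorem static_add_quadratic_eq_mul (d Lam lam mu e L : ℝ)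
    (hLam : Lam ≠ 0) (hlam : lam ≠ 0) (he : e ≠ 0) (hL : L ≠ 0) :
    d * Lam * mu / lam + (d ^ 2 * mu * (e + L) / (2 * e * L)) * (1 - mu / lam) ^ 2 =
      d * Lam * mu / lam *
        (1 + d * (lam - mu) * (e + L) / (Lam * e * L) * (1 - mu / lam) / 2) := by
  field_simp

theorem mul_div_le_one_of_lt_div {d K c : ℝ} (hK : 0 < K) (hc : 0 < c) (h : d < K / c) :
    d * c / K ≤ 1 := by
  rw [div_le_one hK]
  exact ((lt_div_iff₀ hc).1 h).le

theorem revenue_ratio_low_regime_general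
    (Lam lam mu e L zT zC : ℝ)
    (hLam : 0 < Lam) (hlam : 0 < lam) (hmu : 0 < mu) (he : 0 < e) (hL : 0 < L)
    (hmulam : mu < lam)
    (hlow1 : 0 ≤ zT - zC)
    (hlow2 : zT - zC < Lam * e * L / ((lam - mu) * (e + L))) :
    (zT - zC) * Lam * mu / lam ≥
      (2 / (3 - mu / lam)) *
        ((zT - zC) * Lam * mu / lam +
          ((zT - zC) ^ 2 * mu * (e + L) / (2 * e * L)) * (1 - mu / lam) ^ 2) := by
  have hgap : 0 ≤ 1 - mu / lam := sub_nonneg.2 ((div_le_one hlam).2 hmulam.le)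
  have ht : (zT - zC) * (lam - mu) * (e + L) / (Lam * e * L) ≤ 1 := by
    rw [mul_assoc]
    exact mul_div_le_one_of_lt_div (by positivity) (mul_pos (sub_pos.2 hmulam) (add_pos he hL))
      hlow2
  rw [ge_iff_le, static_add_quadratic_eq_mul _ _ _ _ _ _ hLam.ne' hlam.ne' he.ne' hL.ne',
    show 3 - mu / lam = 2 + (1 - mu / lam) by ring]
  exact two_div_two_add_mul_mul_one_add_le (by positivity) hgap ht

/-- Revenue-ratio guarantee in the low transit-cost regime of the bottleneck
model with an outside option. -/
theorem revenue_ratio_low_regime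
    (Lam lam mu e L zT zC : ℝ)
    (hLam : 0 < Lam) (hlam : 0 < lam) (hmu : 0 < mu) (he : 0 < e) (hL : 0 < L)
    (hmulam : mu < lam) (hz : zC ≤ zT)
    (hlow1 : 0 ≤ zT - zC)
    (hlow2 : zT - zC < Lam * e * L / ((lam - mu) * (e + L))) :
    (zT - zC) * Lam * mu / lam ≥
      (2 / (3 - mu / lam)) *
        ((zT - zC) * Lam * mu / lam +
          ((zT - zC) ^ 2 * mu * (e + L) / (2 * e * L)) * (1 - mu / lam) ^ 2) :=
  revenue_ratio_low_regime_general Lam lam mu e L zT zC hLam hlam hmu he hL hmulam hlow1 hlow2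
end

section
/- Let Λ, λ, μ, e, L be positive reals with μ < λ, and let z_T ≥ z_C with z_T − z_C ∈ [Λ·e·L/((λ−μ)(e+L)), (Λ·e·L/(e+L))·(1/(λ−μ) + 2/μ)]. Define s = Λ·e·L/((z_T − z_C)(λ−μ)(e+L)) (so s ≤ 1), R_s = (μ·e·L/(4(e+L)(1−μ/λ)))·[Λ/λ + ((e+L)/(eL))(1−μ/λ)(z_T − z_C)]², and R_d† = Λ·(μ/λ)·(z_T − z_C) + ((z_T − z_C)²·μ(e+L)/(2eL))·(1−μ/λ)². Then R_s ≥ min{(2+s)/4, 1/(2(1−μ/λ))} · R_d†. -/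
lemma revenue_key_ineq (a b β : ℝ) (ha : 0 < a) (hb : 0 < b)
    (hβ0 : 0 < β) (hβ1 : β < 1) :
    min ((2 + a / b) / 4) (1 / (2 * β)) * (a * b + β * b ^ 2 / 2) ≤
      (a + b) ^ 2 / 4 := by
  have hX : 0 ≤ a * b + β * b ^ 2 / 2 := by positivity
  rcases le_total (a * β) (2 * b * (1 - β)) with h | h
  · have hmin : min ((2 + a / b) / 4) (1 / (2 * β)) ≤ (2 + a / b) / 4 :=
      min_le_left _ _
    have step : (2 + a / b) / 4 * (a * b + β * b ^ 2 / 2) ≤ (a + b) ^ 2 / 4 := by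
      have e1 : (2 + a / b) / 4 * (a * b + β * b ^ 2 / 2)
          = ((2 * b + a) * (a * b + β * b ^ 2 / 2)) / (4 * b) := by
        field_simp
      rw [e1, div_le_div_iff₀ (by positivity) (by norm_num : (0:ℝ) < 4)]
      nlinarith [mul_le_mul_of_nonneg_left h (sq_nonneg b)]
    exact le_trans (mul_le_mul_of_nonneg_right hmin hX) step
  · have hmin : min ((2 + a / b) / 4) (1 / (2 * β)) ≤ 1 / (2 * β) :=
      min_le_right _ _
    have step : 1 / (2 * β) * (a * b + β * b ^ 2 / 2) ≤ (a + b) ^ 2 / 4 := by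
      have e1 : 1 / (2 * β) * (a * b + β * b ^ 2 / 2)
          = (a * b + β * b ^ 2 / 2) / (2 * β) := by ring
      rw [e1, div_le_div_iff₀ (by positivity) (by norm_num : (0:ℝ) < 4)]
      nlinarith [mul_le_mul_of_nonneg_left h ha.le]
    exact le_trans (mul_le_mul_of_nonneg_right hmin hX) step

/-- Intermediate-regime revenue bound for the bottleneck model with an
outside option. -/
theorem revenue_ratio_intermediate_regime
    (Lam lam mu e L zT zC : ℝ)
    (hLam : 0 < Lam) (hlam : 0 < lam) (hmu : 0 < mu) (he : 0 < e) (hL : 0 < L)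
    (hmulam : mu < lam) (hz : zC ≤ zT)
    (hmid1 : Lam * e * L / ((lam - mu) * (e + L)) ≤ zT - zC)
    (hmid2 : zT - zC ≤ (Lam * e * L / (e + L)) * (1 / (lam - mu) + 2 / mu)) :
    (mu * e * L / (4 * (e + L) * (1 - mu / lam))) *
        (Lam / lam + ((e + L) / (e * L)) * (1 - mu / lam) * (zT - zC)) ^ 2 ≥
      min ((2 + Lam * e * L / ((zT - zC) * (lam - mu) * (e + L))) / 4)
          (1 / (2 * (1 - mu / lam))) *
        (Lam * (mu / lam) * (zT - zC) +
          ((zT - zC) ^ 2 * mu * (e + L) / (2 * e * L)) * (1 - mu / lam) ^ 2) := by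
  have hlm : 0 < lam - mu := sub_pos.2 hmulam
  have hD : 0 < zT - zC := lt_of_lt_of_le (by positivity) hmid1
  have hβ : 0 < 1 - mu / lam := by
    have : mu / lam < 1 := (div_lt_one hlam).2 hmulam
    linarith
  have hβ1 : 1 - mu / lam < 1 := by
    have : 0 < mu / lam := by positivity
    linarith
  set β := 1 - mu / lam with hβ_def
  set a := Lam / lam with ha_def
  set b := (e + L) / (e * L) * β * (zT - zC) with hb_def
  have ha : 0 < a := by positivity
  have hb : 0 < b := by positivity
  set c := mu * e * L / ((e + L) * β) with hc_def
  have hc : 0 < c := by positivity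
  have h1 : Lam * e * L / ((zT - zC) * (lam - mu) * (e + L)) = a / b := by
    rw [ha_def, hb_def, hβ_def]
    field_simp
  have h2 : mu * e * L / (4 * (e + L) * β) * (a + b) ^ 2
      = c * ((a + b) ^ 2 / 4) := by
    rw [hc_def]
    field_simp
  have h3 : Lam * (mu / lam) * (zT - zC) +
      (zT - zC) ^ 2 * mu * (e + L) / (2 * e * L) * β ^ 2
      = c * (a * b + β * b ^ 2 / 2) := by
    rw [hc_def, ha_def, hb_def]
    field_simp
  rw [ge_iff_le, h1, h2, h3]
  calc min ((2 + a / b) / 4) (1 / (2 * β)) * (c * (a * b + β * b ^ 2 / 2))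
      = c * (min ((2 + a / b) / 4) (1 / (2 * β)) * (a * b + β * b ^ 2 / 2)) := by
        ring
    _ ≤ c * ((a + b) ^ 2 / 4) :=
        mul_le_mul_of_nonneg_left (revenue_key_ineq a b β ha hb hβ hβ1) hc.le
end

section
/- Let Λ, λ, μ, e, L be positive reals with μ < λ, and let z_T ≥ z_C with z_T − z_C > (Λ·e·L/(e+L))·(1/(λ−μ) + 2/μ). Set R_s = (z_T − z_C)·Λ − Λ²·e·L/(μ(e+L)) and R_d = (z_T − z_C)·Λ − (Λ²/(2μ))·(eL/(e+L)). Then R_s ≥ (2/3)·R_d. -/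
/-- Revenue-ratio guarantee in the high transit-cost regime of the bottleneck
model with an outside option. -/
theorem revenue_ratio_high_regime
    (Lam lam mu e L zT zC : ℝ)
    (hLam : 0 < Lam) (hlam : 0 < lam) (hmu : 0 < mu) (he : 0 < e) (hL : 0 < L)
    (hmulam : mu < lam) (hz : zC ≤ zT)
    (hhigh : zT - zC > (Lam * e * L / (e + L)) * (1 / (lam - mu) + 2 / mu)) :
    (zT - zC) * Lam - Lam ^ 2 * e * L / (mu * (e + L)) ≥
      (2 / 3) * ((zT - zC) * Lam - (Lam ^ 2 / (2 * mu)) * (e * L / (e + L))) := by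
  have heL : 0 < e + L := by linarith
  have hK : 0 < Lam * e * L / (e + L) := by positivity
  have hlm : 0 < 1 / (lam - mu) := by
    have : 0 < lam - mu := by linarith
    positivity
  have h1 : zT - zC ≥ (Lam * e * L / (e + L)) * (2 / mu) := by nlinarith
  set x : ℝ := Lam * e * L / (e + L) / mu with hx
  have hx0 : 0 < x := by positivity
  have hD : zT - zC ≥ 2 * x := by
    have : Lam * e * L / (e + L) * (2 / mu) = 2 * x := by rw [hx]; ring
    linarith
  have h2 : Lam ^ 2 * e * L / (mu * (e + L)) = Lam * x := by
    rw [hx]; field_simp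
  have h3 : (Lam ^ 2 / (2 * mu)) * (e * L / (e + L)) = Lam * x / 2 := by
    rw [hx]; field_simp
  rw [h2, h3]
  nlinarith [mul_le_mul_of_nonneg_right hD hLam.le]
end

section
/- Let Λ, λ, μ, e, L be positive reals with μ < λ, and let z_T ≥ z_C with 0 < z_T − z_C ≤ Λ·e·L/(μ(e+L)). Define SC_d = z_C·Λ·μ/λ + z_T·(1 − μ/λ)·Λ − ((z_T − z_C)²·μ(e+L)/(2eL))·(1 − μ/λ)³ and SC* = z_C·Λ + (1 − μ/λ)·Λ·(z_T − z_C) − (1 − μ/λ)·(μ(e+L)/(2eL))·(z_T − z_C)². Then SC_d ≤ 2·SC*. -/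
/-- System-cost guarantee for dynamic revenue-optimal tolls in Vickrey's
bottleneck model with an outside option. -/
theorem system_cost_dynamic_rev_opt
    (Lam lam mu e L zT zC : ℝ)
    (hLam : 0 < Lam) (hlam : 0 < lam) (hmu : 0 < mu) (he : 0 < e) (hL : 0 < L)
    (hzC : 0 < zC)
    (hmulam : mu < lam) (hz : zC ≤ zT)
    (hreg1 : 0 < zT - zC) (hreg2 : zT - zC ≤ Lam * e * L / (mu * (e + L))) :
    zC * Lam * mu / lam + zT * (1 - mu / lam) * Lam -
        ((zT - zC) ^ 2 * mu * (e + L) / (2 * e * L)) * (1 - mu / lam) ^ 3 ≤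
      2 * (zC * Lam + (1 - mu / lam) * Lam * (zT - zC) -
        (1 - mu / lam) * (mu * (e + L) / (2 * e * L)) * (zT - zC) ^ 2) := by
  have heL : 0 < e * L := mul_pos he hL
  have hmuL : 0 < mu * (e + L) := by positivity
  have hr : mu / lam < 1 := (div_lt_one hlam).2 hmulam
  have h1r : 0 < 1 - mu / lam := by linarith
  have hK : 0 < mu * (e + L) / (2 * e * L) := by positivity
  rw [le_div_iff₀ hmuL] at hreg2
  have h2K : 2 * (mu * (e + L) / (2 * e * L)) * (zT - zC) ≤ Lam := by
    have heq : 2 * (mu * (e + L) / (2 * e * L)) * (zT - zC)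
        = (zT - zC) * (mu * (e + L)) / (e * L) := by
      field_simp
    rw [heq, div_le_iff₀ heL]
    nlinarith [hreg2]
  have hA : 0 ≤ ((1 - mu / lam) * (zT - zC)) *
      (Lam - 2 * (mu * (e + L) / (2 * e * L)) * (zT - zC)) :=
    mul_nonneg (mul_nonneg h1r.le hreg1.le) (by linarith)
  have hB : 0 ≤ (mu * (e + L) / (2 * e * L) * (zT - zC) ^ 2) * (1 - mu / lam) ^ 3 :=
    mul_nonneg (mul_nonneg hK.le (sq_nonneg _)) (pow_nonneg h1r.le 3)
  have hC : 0 < zC * Lam := mul_pos hzC hLam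
  have key : 2 * (zC * Lam + (1 - mu / lam) * Lam * (zT - zC) -
        (1 - mu / lam) * (mu * (e + L) / (2 * e * L)) * (zT - zC) ^ 2)
      - (zC * Lam * mu / lam + zT * (1 - mu / lam) * Lam -
        ((zT - zC) ^ 2 * mu * (e + L) / (2 * e * L)) * (1 - mu / lam) ^ 3)
      = zC * Lam
        + ((1 - mu / lam) * (zT - zC)) *
            (Lam - 2 * (mu * (e + L) / (2 * e * L)) * (zT - zC))
        + (mu * (e + L) / (2 * e * L) * (zT - zC) ^ 2) * (1 - mu / lam) ^ 3 := by
    ring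
  linarith [key, hA, hB, hC]
end

section
/- Let μ: [0, T] → ℝ be integrable with 0 ≤ μ(x) ≤ μ_f for all x, let 0 < a ≤ T, and suppose ∫₀^a μ(Δ) dΔ = g·F₁ and ∫_a^T μ(Δ) dΔ = (1−g)·F₁ for some g ∈ [0,1] and F₁ > 0 with μ_f·a = F₁. Then for any constants K ≥ 0 and e > 0 with K ≥ e·T, ∫₀^T μ(Δ)·(K − e·Δ) dΔ ≤ F₁·K − F₁·e·a/2. -/
/-! The weight `K - e Δ` is decreasing and the total mass `∫₀^T μ = g F₁ + (1 - g) F₁ = μ_f a` is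
fixed, so the weighted integral is largest when all the mass sits at full height `μ_f` on
`[0, a]` (bathtub principle): pointwise, `(μ Δ - μ_f 𝟙[Δ ≤ a]) (w Δ - w a) ≤ 0`. -/

open intervalIntegral Set

section Bathtub

variable {φ w : ℝ → ℝ} {lo a hi M : ℝ}

theorem integral_mul_le_of_antitoneOn (hla : lo ≤ a) (hah : a ≤ hi)
    (hφ : IntervalIntegrable φ MeasureTheory.volume lo hi) (hw : ContinuousOn w (Icc lo hi))
    (hw_anti : AntitoneOn w (Icc lo hi)) (hφ_bound : ∀ x ∈ Icc lo hi, 0 ≤ φ x ∧ φ x ≤ M) :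
    ∫ x in lo..hi, φ x * w x ≤
      (∫ x in lo..a, M * w x) + ((∫ x in lo..hi, φ x) - M * (a - lo)) * w a := by
  have hlh : lo ≤ hi := hla.trans hah
  have ha_mem : a ∈ Icc lo hi := ⟨hla, hah⟩
  have hsub_left : uIcc lo a ⊆ uIcc lo hi :=
    uIcc_subset_uIcc_left (by simpa [uIcc_of_le hlh])
  have hsub_right : uIcc a hi ⊆ uIcc lo hi :=
    uIcc_subset_uIcc_right (by simpa [uIcc_of_le hlh])
  have hφw : IntervalIntegrable (fun x => φ x * w x) MeasureTheory.volume lo hi :=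
    hφ.mul_continuousOn (by rwa [uIcc_of_le hlh])
  have hMw : IntervalIntegrable (fun x => M * w x) MeasureTheory.volume lo a :=
    ((hw.mono (Icc_subset_Icc_right hah)).intervalIntegrable_of_Icc hla).const_mul M
  have hφ_left : IntervalIntegrable φ MeasureTheory.volume lo a := hφ.mono_set hsub_left
  have hφ_right : IntervalIntegrable φ MeasureTheory.volume a hi := hφ.mono_set hsub_right
  have h_left : ∫ x in lo..a, φ x * w x ≤ ∫ x in lo..a, (M * w x + (φ x - M) * w a) := by
    refine integral_mono_on hla (hφw.mono_set hsub_left)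
      (hMw.add ((hφ_left.sub intervalIntegrable_const).mul_const _)) fun x hx => ?_
    have hx_mem : x ∈ Icc lo hi := ⟨hx.1, hx.2.trans hah⟩
    have hwx : w a ≤ w x := hw_anti hx_mem ha_mem hx.2
    nlinarith [mul_nonneg (sub_nonneg.2 (hφ_bound x hx_mem).2) (sub_nonneg.2 hwx)]
  have h_right : ∫ x in a..hi, φ x * w x ≤ ∫ x in a..hi, φ x * w a := by
    refine integral_mono_on hah (hφw.mono_set hsub_right) (hφ_right.mul_const _)
      fun x hx => ?_
    have hx_mem : x ∈ Icc lo hi := ⟨hla.trans hx.1, hx.2⟩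
    exact mul_le_mul_of_nonneg_left (hw_anti ha_mem hx_mem hx.1) (hφ_bound x hx_mem).1
  rw [integral_add hMw ((hφ_left.sub intervalIntegrable_const).mul_const _), integral_mul_const,
    integral_sub hφ_left intervalIntegrable_const, integral_const, smul_eq_mul] at h_left
  rw [integral_mul_const] at h_right
  rw [← integral_add_adjacent_intervals (hφw.mono_set hsub_left) (hφw.mono_set hsub_right),
    ← integral_add_adjacent_intervals hφ_left hφ_right]
  linarith

end Bathtub

theorem mfd_revenue_upper_bound_general
    (μ : ℝ → ℝ) (T a muf g F1 K e : ℝ)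
    (hint : IntervalIntegrable μ MeasureTheory.volume 0 T)
    (hbound : ∀ x ∈ Set.Icc (0 : ℝ) T, 0 ≤ μ x ∧ μ x ≤ muf)
    (ha0 : 0 < a) (haT : a ≤ T)
    (hI1 : ∫ Δ in (0 : ℝ)..a, μ Δ = g * F1)
    (hI2 : ∫ Δ in a..T, μ Δ = (1 - g) * F1)
    (hmufa : muf * a = F1)
    (he : 0 < e) :
    ∫ Δ in (0 : ℝ)..T, μ Δ * (K - e * Δ) ≤ F1 * K - F1 * e * a / 2 := by
  have ha_mem : a ∈ uIcc 0 T := by rw [uIcc_of_le (ha0.le.trans haT)]; exact ⟨ha0.le, haT⟩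
  have h_total : ∫ Δ in (0 : ℝ)..T, μ Δ = muf * a := by
    rw [← integral_add_adjacent_intervals (hint.mono_set (uIcc_subset_uIcc left_mem_uIcc ha_mem))
      (hint.mono_set (uIcc_subset_uIcc ha_mem right_mem_uIcc)), hI1, hI2, hmufa]
    ring
  have h_full_throughput : ∫ Δ in (0 : ℝ)..a, muf * (K - e * Δ) = F1 * K - F1 * e * a / 2 := by
    rw [← hmufa, integral_const_mul, integral_sub intervalIntegrable_const
      ((continuous_const_mul e).intervalIntegrable 0 a), integral_const_mul, integral_id,
      integral_const, smul_eq_mul]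
    ring
  calc ∫ Δ in (0 : ℝ)..T, μ Δ * (K - e * Δ)
      ≤ (∫ Δ in (0 : ℝ)..a, muf * (K - e * Δ)) + (muf * a - muf * (a - 0)) * (K - e * a) := by
        rw [← h_total]
        exact integral_mul_le_of_antitoneOn ha0.le haT hint (by fun_prop)
          (fun _ _ _ _ hxy => sub_le_sub_left (mul_le_mul_of_nonneg_left hxy he.le) K) hbound
    _ = F1 * K - F1 * e * a / 2 := by rw [h_full_throughput]; ring

/-- Key analytic lemma in the proof that the revenue-optimal dynamic toll in
the MFD framework operates the system at maximum throughput. -/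
theorem mfd_revenue_upper_bound
    (μ : ℝ → ℝ) (T a muf g F1 K e : ℝ)
    (hT : 0 < T)
    (hint : IntervalIntegrable μ MeasureTheory.volume 0 T)
    (hbound : ∀ x ∈ Set.Icc (0 : ℝ) T, 0 ≤ μ x ∧ μ x ≤ muf)
    (ha0 : 0 < a) (haT : a ≤ T)
    (hg : g ∈ Set.Icc (0 : ℝ) 1) (hF1 : 0 < F1)
    (hI1 : ∫ Δ in (0 : ℝ)..a, μ Δ = g * F1)
    (hI2 : ∫ Δ in a..T, μ Δ = (1 - g) * F1)
    (hmufa : muf * a = F1)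
    (hK : 0 ≤ K) (he : 0 < e) (hKT : e * T ≤ K) :
    ∫ Δ in (0 : ℝ)..T, μ Δ * (K - e * Δ) ≤ F1 * K - F1 * e * a / 2 :=
  mfd_revenue_upper_bound_general μ T a muf g F1 K e hint hbound ha0 haT hI1 hI2 hmufa he
end

section
/- Let Λ, λ, μ_f, e, L be positive reals with μ_f < λ, and let z_T ≥ z_C with 0 ≤ z_T − z_C ≤ Λ·e·L/((λ−μ_f)(e+L)). Set R_s = (z_T − z_C)·Λ·μ_f/λ and R_d = (z_T − z_C)·Λ·μ_f/λ + ((z_T − z_C)²·μ_f(e+L)/(2eL))·(1 − μ_f/λ)². Then R_s ≥ (2/(3 − μ_f/λ))·R_d, and consequently R_s ≥ (1/2)·R_d. -/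
/-!
Write `τ = zT - zC`, `r = μ_f / λ`, `R_s = τ Λ r` and `R_d = R_s + G`. The bound
`R_s ≥ 2 / (3 - r) · R_d` rearranges to `2 G ≤ (1 - r) R_s`, and
`2 G - (1 - r) R_s` factors as `τ (1 - r) μ_f / (λ e L) · (τ (λ - μ_f)(e + L) - Λ e L)`,
whose second factor is nonpositive exactly in the no-congestion regime. Since `2 / (3 - r) ≥ 1 / 2`
for `r ≥ 0`, the factor-two guarantee follows.
-/

/-- `R_s` for the static toll `τ` with throughput `μ`. -/
noncomputable def staticRevenue (τ Λ lam μ : ℝ) : ℝ := τ * Λ * μ / lam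

/-- `R_d - R_s`: the extra revenue of the dynamic optimal toll over the static one. -/
noncomputable def dynamicRevenueGain (τ lam μ e L : ℝ) : ℝ :=
  (τ ^ 2 * μ * (e + L) / (2 * e * L)) * (1 - μ / lam) ^ 2

theorem two_mul_dynamicRevenueGain_sub (τ Λ lam μ e L : ℝ)
    (hlam : lam ≠ 0) (he : e ≠ 0) (hL : L ≠ 0) :
    2 * dynamicRevenueGain τ lam μ e L - (1 - μ / lam) * staticRevenue τ Λ lam μ =
      τ * (1 - μ / lam) * μ / (lam * e * L) * (τ * ((lam - μ) * (e + L)) - Λ * e * L) := by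
  unfold dynamicRevenueGain staticRevenue
  field_simp

theorem two_mul_dynamicRevenueGain_le {τ Λ lam μ e L : ℝ} (hτ : 0 ≤ τ) (hlam : 0 < lam)
    (hμ : 0 ≤ μ) (hμlam : μ ≤ lam) (he : 0 < e) (hL : 0 < L)
    (hreg : τ * ((lam - μ) * (e + L)) ≤ Λ * e * L) :
    2 * dynamicRevenueGain τ lam μ e L ≤ (1 - μ / lam) * staticRevenue τ Λ lam μ := by
  have hr : 0 ≤ 1 - μ / lam := sub_nonneg.2 ((div_le_one hlam).2 hμlam)
  rw [← sub_nonpos, two_mul_dynamicRevenueGain_sub τ Λ lam μ e L hlam.ne' he.ne' hL.ne']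
  exact mul_nonpos_of_nonneg_of_nonpos (by positivity) (sub_nonpos.2 hreg)

theorem two_div_three_sub_mul_add_le {S G r : ℝ} (hr : r < 3) (h : 2 * G ≤ (1 - r) * S) :
    2 / (3 - r) * (S + G) ≤ S := by
  rw [div_mul_eq_mul_div, div_le_iff₀ (by linarith)]
  linarith

theorem half_mul_add_le {S G r : ℝ} (hr₀ : 0 ≤ r) (hr₁ : r < 1) (hG : 0 ≤ G)
    (h : 2 * G ≤ (1 - r) * S) : 1 / 2 * (S + G) ≤ S := by
  have hS : 0 ≤ S := nonneg_of_mul_nonneg_right (a := 1 - r) (by linarith) (by linarith)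
  nlinarith [mul_nonneg hr₀ hS]

theorem mfd_static_revenue_guarantee_general
    (Lam lam muf e L zT zC : ℝ)
    (hlam : 0 < lam) (hmuf : 0 < muf) (he : 0 < e) (hL : 0 < L)
    (hmuflam : muf < lam)
    (hreg1 : 0 ≤ zT - zC)
    (hreg2 : zT - zC ≤ Lam * e * L / ((lam - muf) * (e + L))) :
    (zT - zC) * Lam * muf / lam ≥
      (2 / (3 - muf / lam)) *
        ((zT - zC) * Lam * muf / lam +
          ((zT - zC) ^ 2 * muf * (e + L) / (2 * e * L)) * (1 - muf / lam) ^ 2) ∧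
    (zT - zC) * Lam * muf / lam ≥
      (1 / 2) *
        ((zT - zC) * Lam * muf / lam +
          ((zT - zC) ^ 2 * muf * (e + L) / (2 * e * L)) * (1 - muf / lam) ^ 2) := by
  have hreg : (zT - zC) * ((lam - muf) * (e + L)) ≤ Lam * e * L :=
    (le_div_iff₀ (by nlinarith)).1 hreg2
  have hkey := two_mul_dynamicRevenueGain_le hreg1 hlam hmuf.le hmuflam.le he hL hreg
  have hr : muf / lam < 1 := (div_lt_one hlam).2 hmuflam
  have hG : 0 ≤ dynamicRevenueGain (zT - zC) lam muf e L := by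
    unfold dynamicRevenueGain; positivity
  exact ⟨two_div_three_sub_mul_add_le (by linarith) hkey,
    half_mul_add_le (div_pos hmuf hlam).le hr hG hkey⟩

/-- Revenue guarantee for the static toll `zT - zC` in an urban system
governed by a triangular MFD with maximum throughput `muf`. -/
theorem mfd_static_revenue_guarantee
    (Lam lam muf e L zT zC : ℝ)
    (hLam : 0 < Lam) (hlam : 0 < lam) (hmuf : 0 < muf) (he : 0 < e) (hL : 0 < L)
    (hmuflam : muf < lam) (hz : zC ≤ zT)
    (hreg1 : 0 ≤ zT - zC)
    (hreg2 : zT - zC ≤ Lam * e * L / ((lam - muf) * (e + L))) :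
    (zT - zC) * Lam * muf / lam ≥
      (2 / (3 - muf / lam)) *
        ((zT - zC) * Lam * muf / lam +
          ((zT - zC) ^ 2 * muf * (e + L) / (2 * e * L)) * (1 - muf / lam) ^ 2) ∧
    (zT - zC) * Lam * muf / lam ≥
      (1 / 2) *
        ((zT - zC) * Lam * muf / lam +
          ((zT - zC) ^ 2 * muf * (e + L) / (2 * e * L)) * (1 - muf / lam) ^ 2) :=
  mfd_static_revenue_guarantee_general Lam lam muf e L zT zC hlam hmuf he hL hmuflam hreg1 hreg2
end
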